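/- Let F be a field, d₀, d₁, d₂ ∈ F× with d₀d₁d₂ ≠ −1, and let φ be the split Albert multiplication on F³. If y, y' ∈ F³ are linearly independent over F, then the map F³ → F³ × F³ given by x ↦ (φ(x,y), φ(x,y')) is injective. -/
import Mathlib


/-- The multiplication of the split Albert algebra `φ_{d₀,d₁,d₂}` on `F³`:
`φ(α_i,β_i) = 0`, `φ(α_i,β_{i+1}) = γ_{i+2}`, `φ(α_i,β_{i+2}) = d_{i+1}γ_{i+1}`,
written in coordinates. -/
def albert {F : Type*} [Field F] (d x y : Fin 3 → F) : Fin 3 → F :=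
  fun k => x (k + 1) * y (k + 2) + d k * x (k + 2) * y (k + 1)

/-- If `y, y'` are linearly independent, then `x ↦ (xy, xy')` is injective. -/
theorem stmt5 {F : Type*} [Field F] (d : Fin 3 → F) (hd : ∀ i, d i ≠ 0)
    (hd' : d 0 * d 1 * d 2 ≠ -1) (y y' : Fin 3 → F)
    (h : LinearIndependent F ![y, y']) :
    Function.Injective (fun x : Fin 3 → F => (albert d x y, albert d x y')) := by
  rw [LinearIndependent.pair_iff] at h
  intro a b hab
  simp only [Prod.mk.injEq] at hab
  obtain ⟨h1, h2⟩ := hab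
  set x : Fin 3 → F := fun i => a i - b i with hxdef
  have f1 : ∀ j : Fin 3, j + 2 + 1 = j := by decide
  have f2 : ∀ j : Fin 3, j + 2 + 2 = j + 1 := by decide
  have f3 : ∀ j : Fin 3, j + 1 + 2 = j := by decide
  have f4 : ∀ j : Fin 3, j + 1 + 1 = j + 2 := by decide
  have h3 : ∀ k j : Fin 3, j = k ∨ j = k + 1 ∨ j = k + 2 := by decide
  have e : ∀ k, x (k+1) * y (k+2) + d k * x (k+2) * y (k+1) = 0 := by
    intro k
    have hk := congrFun h1 k
    simp only [albert] at hk
    simp only [hxdef]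
    linear_combination hk
  have e' : ∀ k, x (k+1) * y' (k+2) + d k * x (k+2) * y' (k+1) = 0 := by
    intro k
    have hk := congrFun h2 k
    simp only [albert] at hk
    simp only [hxdef]
    linear_combination hk
  set c : Fin 3 → F := fun k => y (k+1) * y' (k+2) - y (k+2) * y' (k+1) with hcdef
  have hcne : ∃ k, c k ≠ 0 := by
    by_contra hc
    push_neg at hc
    by_cases hy : y = 0
    · have := (h 1 0 (by simp [hy])).1
      exact one_ne_zero this
    · obtain ⟨j, hj⟩ := Function.ne_iff.mp hy
      have hrel : (y' j) • y + (-(y j)) • y' = 0 := by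
        funext m
        simp only [Pi.add_apply, Pi.smul_apply, smul_eq_mul, Pi.zero_apply, neg_mul]
        rcases h3 j m with rfl | rfl | rfl
        · ring
        · have hcj := hc (j+2)
          simp only [hcdef, f1, f2] at hcj
          linear_combination -hcj
        · have hcj := hc (j+1)
          simp only [hcdef, f3, f4] at hcj
          linear_combination hcj
      have := (h (y' j) (-(y j)) hrel).2
      exact hj (by simpa using this)
  obtain ⟨k, hck⟩ := hcne
  have hx1 : x (k+1) = 0 := by
    have h0 : x (k+1) * c k = 0 := by
      simp only [hcdef]
      linear_combination y (k+1) * e' k - y' (k+1) * e k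
    rcases mul_eq_zero.mp h0 with h|h
    · exact h
    · exact absurd h hck
  have hx2 : x (k+2) = 0 := by
    have h0 : d k * (x (k+2) * c k) = 0 := by
      simp only [hcdef]
      linear_combination y' (k+2) * e k - y (k+2) * e' k
    rcases mul_eq_zero.mp ((mul_eq_zero.mp h0).resolve_left (hd k)) with h|h
    · exact h
    · exact absurd h hck
  have ha : x k * y (k+2) = 0 := by
    have hk := e (k+1)
    rw [f4, f3] at hk
    have h0 : d (k+1) * (x k * y (k+2)) = 0 := by linear_combination hk - y k * hx2
    exact (mul_eq_zero.mp h0).resolve_left (hd (k+1))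
  have hb : x k * y (k+1) = 0 := by
    have hk := e (k+2)
    rw [f1, f2] at hk
    linear_combination hk - d (k+2) * y k * hx1
  have hx0 : x k = 0 := by
    have h0 : x k * c k = 0 := by
      simp only [hcdef]
      linear_combination y' (k+2) * hb - y' (k+1) * ha
    rcases mul_eq_zero.mp h0 with h|h
    · exact h
    · exact absurd h hck
  funext i
  have hxi : x i = 0 := by
    rcases h3 k i with rfl | rfl | rfl
    · exact hx0
    · exact hx1
    · exact hx2
  simpa [hxdef, sub_eq_zero] using hxi
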